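/- arXiv:1702.08536 — 4 statements merged into one kernel-verified Lean document; each statement's English description precedes it below -/
import Mathlib

section
/- Let σ > 0, μ1 > μ0, φ ∈ (0,1), and let f0, f1 be the probability density functions of the normal distributions N(μ0, σ²) and N(μ1, σ²) respectively. Define g : ℝ → ℝ by g(x) = φ·f1(x) / (φ·f1(x) + (1−φ)·f0(x)). Then g is strictly monotone increasing on ℝ. -/
open ProbabilityTheory Real

/-!
The posterior probability is the sigmoid of the posterior log-odds, which is the prior log-odds
plus the log-likelihood ratio. For two Gaussians of equal variance the quadratic terms of the
log-densities cancel, so the log-likelihood ratio is an affine function of `x` with slope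
`(μ1 - μ0) / σ²` > 0; composing with the strictly increasing sigmoid gives the claim.
-/

lemma div_add_eq_sigmoid_log_sub_log {a b : ℝ} (ha : 0 < a) (hb : 0 < b) :
    a / (a + b) = sigmoid (log a - log b) := by
  rw [sigmoid_def, neg_sub, exp_sub, exp_log ha, exp_log hb]
  field_simp

lemma log_gaussianPDFReal (μ : ℝ) {v : NNReal} (hv : v ≠ 0) (x : ℝ) :
    log (gaussianPDFReal μ v x) = log (√(2 * π * v))⁻¹ - (x - μ) ^ 2 / (2 * v) := by
  have hc : (√(2 * π * v))⁻¹ ≠ 0 := by positivity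
  rw [gaussianPDFReal, log_mul hc (exp_pos _).ne', log_exp, neg_div, ← sub_eq_add_neg]

lemma log_gaussianPDFReal_sub_log_gaussianPDFReal (μ0 μ1 : ℝ) {v : NNReal} (hv : v ≠ 0)
    (x : ℝ) :
    log (gaussianPDFReal μ1 v x) - log (gaussianPDFReal μ0 v x)
      = (μ1 - μ0) / v * (x - (μ0 + μ1) / 2) := by
  rw [log_gaussianPDFReal μ1 hv, log_gaussianPDFReal μ0 hv]
  have hv' : (v : ℝ) ≠ 0 := by exact_mod_cast hv
  field_simp
  ring

lemma strictMono_log_gaussianPDFReal_sub_log_gaussianPDFReal {μ0 μ1 : ℝ} (hμ : μ0 < μ1)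
    {v : NNReal} (hv : v ≠ 0) :
    StrictMono fun x ↦ log (gaussianPDFReal μ1 v x) - log (gaussianPDFReal μ0 v x) := by
  have hslope : 0 < (μ1 - μ0) / v := div_pos (sub_pos.2 hμ) (by positivity)
  intro x y hxy
  simp only [log_gaussianPDFReal_sub_log_gaussianPDFReal μ0 μ1 hv]
  gcongr

/-- If the two classes emit normally distributed signals with equal variance σ²
(σ > 0), means μ0 < μ1, and prior probability φ ∈ (0,1) of the positive class,
then the discriminant transformation
g(x) = φ·f1(x) / (φ·f1(x) + (1−φ)·f0(x)) is strictly monotone increasing on ℝ. -/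
theorem discriminant_strictMono
    (σ μ0 μ1 φ : ℝ) (hσ : 0 < σ) (hμ : μ0 < μ1) (hφ : φ ∈ Set.Ioo (0 : ℝ) 1)
    (f0 f1 g : ℝ → ℝ)
    (hf0 : f0 = gaussianPDFReal μ0 ⟨σ ^ 2, sq_nonneg σ⟩)
    (hf1 : f1 = gaussianPDFReal μ1 ⟨σ ^ 2, sq_nonneg σ⟩)
    (hg : ∀ x, g x = φ * f1 x / (φ * f1 x + (1 - φ) * f0 x)) :
    StrictMono g := by
  obtain ⟨hφ0, hφ1⟩ := hφ
  have hv : (⟨σ ^ 2, sq_nonneg σ⟩ : NNReal) ≠ 0 :=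
    (NNReal.coe_pos (r := ⟨σ ^ 2, sq_nonneg σ⟩) |>.1 (pow_pos hσ 2)).ne'
  have hf0_pos : ∀ x, 0 < f0 x := fun x ↦ hf0 ▸ gaussianPDFReal_pos _ _ x hv
  have hf1_pos : ∀ x, 0 < f1 x := fun x ↦ hf1 ▸ gaussianPDFReal_pos _ _ x hv
  have hg_sigmoid : g = fun x ↦ sigmoid (log φ - log (1 - φ) + (log (f1 x) - log (f0 x))) := by
    funext x
    rw [hg, div_add_eq_sigmoid_log_sub_log (mul_pos hφ0 (hf1_pos x))
      (mul_pos (sub_pos.2 hφ1) (hf0_pos x)), log_mul hφ0.ne' (hf1_pos x).ne',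
      log_mul (sub_pos.2 hφ1).ne' (hf0_pos x).ne']
    congr 1
    ring
  rw [hg_sigmoid, hf0, hf1]
  exact sigmoid_strictMono.comp
    ((strictMono_log_gaussianPDFReal_sub_log_gaussianPDFReal hμ hv).const_add _)
end

section
/- Let σ0, σ1 > 0 with σ1 > σ0, μ1 > μ0, φ ∈ (0,1), and let f0, f1 be the probability density functions of N(μ0, σ0²) and N(μ1, σ1²). Define g(x) = φ·f1(x) / (φ·f1(x) + (1−φ)·f0(x)). Then g(x) tends to 1 both as x → +∞ and as x → −∞. Symmetrically, if σ1 < σ0, then g(x) tends to 0 both as x → +∞ and as x → −∞. -/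
/-!
The likelihood ratio `f₀ / f₁` is a constant times the exponential of a quadratic with leading
coefficient `1 / (2σ₁²) - 1 / (2σ₀²)`. When `σ₀ < σ₁` this is negative, so `f₀ / f₁ → 0` outside
compact sets, i.e. at both `+∞` and `-∞`, and `g = φ / (φ + (1 - φ) f₀ / f₁) → 1`. When `σ₁ < σ₀`,
swapping the two classes shows that `1 - g` tends to `1`.
-/

open ProbabilityTheory Real Filter Topology NNReal

lemma tendsto_sq_add_const_cocompact (e : ℝ) :
    Tendsto (fun x : ℝ => (x + e) ^ 2) (cocompact ℝ) atTop := by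
  have h : Tendsto (fun x : ℝ => ‖x + e‖) (cocompact ℝ) atTop :=
    tendsto_norm_cocompact_atTop.comp (Homeomorph.addRight e).map_cocompact.le
  exact ((tendsto_pow_atTop two_ne_zero).comp h).congr fun x => by simp

lemma tendsto_quadratic_cocompact_atBot {a : ℝ} (ha : a < 0) (b c : ℝ) :
    Tendsto (fun x => a * x ^ 2 + b * x + c) (cocompact ℝ) atBot := by
  have hsq : ∀ x, a * x ^ 2 + b * x + c = a * (x + b / (2 * a)) ^ 2 + (c - b ^ 2 / (4 * a)) := by
    intro x
    field_simp [ha.ne]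
    ring
  simp only [hsq]
  exact tendsto_atBot_add_const_right _ _
    ((tendsto_sq_add_const_cocompact _).const_mul_atTop_of_neg ha)

lemma gaussianPDFReal_div_gaussianPDFReal (μ₀ μ₁ : ℝ) {v₀ v₁ : ℝ≥0} (hv₀ : v₀ ≠ 0)
    (hv₁ : v₁ ≠ 0) (x : ℝ) :
    gaussianPDFReal μ₀ v₀ x / gaussianPDFReal μ₁ v₁ x =
      √(2 * π * v₁) / √(2 * π * v₀) * exp ((1 / (2 * v₁) - 1 / (2 * v₀)) * x ^ 2
        + (μ₀ / v₀ - μ₁ / v₁) * x + (μ₁ ^ 2 / (2 * v₁) - μ₀ ^ 2 / (2 * v₀))) := by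
  have hv₀' : (v₀ : ℝ) ≠ 0 := by exact_mod_cast hv₀
  have hv₁' : (v₁ : ℝ) ≠ 0 := by exact_mod_cast hv₁
  have hexp : (1 / (2 * v₁) - 1 / (2 * v₀)) * x ^ 2 + (μ₀ / v₀ - μ₁ / v₁) * x
      + (μ₁ ^ 2 / (2 * v₁) - μ₀ ^ 2 / (2 * v₀)) =
      -(x - μ₀) ^ 2 / (2 * v₀) - -(x - μ₁) ^ 2 / (2 * v₁) := by
    field_simp
    ring
  rw [hexp, exp_sub, gaussianPDFReal, gaussianPDFReal]
  field_simp

lemma tendsto_gaussianPDFReal_div_gaussianPDFReal_cocompact (μ₀ μ₁ : ℝ) {v₀ v₁ : ℝ≥0}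
    (hv₀ : v₀ ≠ 0) (hv : v₀ < v₁) :
    Tendsto (fun x => gaussianPDFReal μ₀ v₀ x / gaussianPDFReal μ₁ v₁ x) (cocompact ℝ) (𝓝 0) := by
  have hv₀' : (0 : ℝ) < v₀ := by positivity
  have hlead : 1 / (2 * (v₁ : ℝ)) - 1 / (2 * v₀) < 0 := by
    have : 1 / (2 * (v₁ : ℝ)) < 1 / (2 * v₀) := one_div_lt_one_div_of_lt (by positivity) (by gcongr)
    linarith
  simp only [gaussianPDFReal_div_gaussianPDFReal μ₀ μ₁ hv₀ hv.ne_bot]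
  simpa using ((tendsto_exp_atBot.comp (tendsto_quadratic_cocompact_atBot hlead _ _)).const_mul
    (√(2 * π * v₁) / √(2 * π * v₀)))

lemma tendsto_mul_div_mul_add_mul_of_div_tendsto_zero {α : Type*} {l : Filter α} {u v : α → ℝ}
    {a : ℝ} (b : ℝ) (ha : a ≠ 0) (hv : ∀ x, v x ≠ 0) (h : Tendsto (fun x => u x / v x) l (𝓝 0)) :
    Tendsto (fun x => a * v x / (a * v x + b * u x)) l (𝓝 1) := by
  have hrw : ∀ x, a * v x / (a * v x + b * u x) = a / (a + b * (u x / v x)) := by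
    intro x
    rw [← mul_div_mul_right a _ (hv x), add_mul, mul_assoc, div_mul_cancel₀ _ (hv x), mul_comm]
  simp only [hrw]
  have hlim := (tendsto_const_nhds (x := a)).div (tendsto_const_nhds.add (h.const_mul b))
    (by simpa using ha)
  rwa [mul_zero, add_zero, div_self ha] at hlim

theorem discriminant_limits_general
    (σ0 σ1 μ0 μ1 φ : ℝ) (hσ0 : 0 < σ0) (hσ1 : 0 < σ1)
    (hφ : φ ∈ Set.Ioo (0 : ℝ) 1)
    (f0 f1 g : ℝ → ℝ)
    (hf0 : f0 = gaussianPDFReal μ0 ⟨σ0 ^ 2, sq_nonneg σ0⟩)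
    (hf1 : f1 = gaussianPDFReal μ1 ⟨σ1 ^ 2, sq_nonneg σ1⟩)
    (hg : ∀ x, g x = φ * f1 x / (φ * f1 x + (1 - φ) * f0 x)) :
    (σ0 < σ1 →
      Tendsto g atTop (nhds 1) ∧ Tendsto g atBot (nhds 1)) ∧
    (σ1 < σ0 →
      Tendsto g atTop (nhds 0) ∧ Tendsto g atBot (nhds 0)) := by
  obtain ⟨hφ0, hφ1⟩ := hφ
  have hv0 : (⟨σ0 ^ 2, sq_nonneg σ0⟩ : ℝ≥0) ≠ 0 := by simpa [← NNReal.coe_eq_zero] using hσ0.ne'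
  have hv1 : (⟨σ1 ^ 2, sq_nonneg σ1⟩ : ℝ≥0) ≠ 0 := by simpa [← NNReal.coe_eq_zero] using hσ1.ne'
  have hf0pos x : 0 < f0 x := hf0 ▸ gaussianPDFReal_pos _ _ x hv0
  have hf1pos x : 0 < f1 x := hf1 ▸ gaussianPDFReal_pos _ _ x hv1
  have both_ends {c : ℝ} (h : Tendsto g (cocompact ℝ) (𝓝 c)) :
      Tendsto g atTop (𝓝 c) ∧ Tendsto g atBot (𝓝 c) :=
    ⟨h.mono_left atTop_le_cocompact, h.mono_left atBot_le_cocompact⟩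
  refine ⟨fun h => both_ends ?_, fun h => both_ends ?_⟩
  · have hratio : Tendsto (fun x => f0 x / f1 x) (cocompact ℝ) (𝓝 0) := by
      subst hf0 hf1
      exact tendsto_gaussianPDFReal_div_gaussianPDFReal_cocompact μ0 μ1 hv0
        (pow_lt_pow_left₀ h hσ0.le two_ne_zero)
    simpa only [← hg] using tendsto_mul_div_mul_add_mul_of_div_tendsto_zero (1 - φ) hφ0.ne'
      (fun x => (hf1pos x).ne') hratio
  · have hratio : Tendsto (fun x => f1 x / f0 x) (cocompact ℝ) (𝓝 0) := by
      subst hf0 hf1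
      exact tendsto_gaussianPDFReal_div_gaussianPDFReal_cocompact μ1 μ0 hv1
        (pow_lt_pow_left₀ h hσ1.le two_ne_zero)
    have hcompl : ∀ x, g x = 1 - (1 - φ) * f0 x / ((1 - φ) * f0 x + φ * f1 x) := by
      intro x
      have : 0 < (1 - φ) * f0 x + φ * f1 x := by
        have := hf0pos x; have := hf1pos x; positivity
      rw [hg, eq_sub_iff_add_eq, add_comm (φ * f1 x), ← add_div, add_comm (φ * f1 x),
        div_self this.ne']
    have hlim := (tendsto_const_nhds (x := (1 : ℝ))).sub
      (tendsto_mul_div_mul_add_mul_of_div_tendsto_zero φ (sub_pos.2 hφ1).ne'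
        (fun x => (hf0pos x).ne') hratio)
    rw [sub_self] at hlim
    exact hlim.congr fun x => (hcompl x).symm

/-- For unequal variances, the discriminant transformation
g(x) = φ·f1(x) / (φ·f1(x) + (1−φ)·f0(x)) has the same limit at +∞ and −∞:
if σ1 > σ0 it tends to 1 at both ends, and if σ1 < σ0 it tends to 0 at both ends. -/
theorem discriminant_limits
    (σ0 σ1 μ0 μ1 φ : ℝ) (hσ0 : 0 < σ0) (hσ1 : 0 < σ1)
    (hμ : μ0 < μ1) (hφ : φ ∈ Set.Ioo (0 : ℝ) 1)
    (f0 f1 g : ℝ → ℝ)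
    (hf0 : f0 = gaussianPDFReal μ0 ⟨σ0 ^ 2, sq_nonneg σ0⟩)
    (hf1 : f1 = gaussianPDFReal μ1 ⟨σ1 ^ 2, sq_nonneg σ1⟩)
    (hg : ∀ x, g x = φ * f1 x / (φ * f1 x + (1 - φ) * f0 x)) :
    (σ0 < σ1 →
      Tendsto g atTop (nhds 1) ∧ Tendsto g atBot (nhds 1)) ∧
    (σ1 < σ0 →
      Tendsto g atTop (nhds 0) ∧ Tendsto g atBot (nhds 0)) :=
  discriminant_limits_general σ0 σ1 μ0 μ1 φ hσ0 hσ1 hφ f0 f1 g hf0 hf1 hg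
end

section
/- Let φ ∈ (0,1), σ, σ' > 0, μ1 > μ0, μ1' > μ0', and suppose (μ1 − μ0)/σ = (μ1' − μ0')/σ'. Let P be the Gaussian mixture measure (1−φ)·N(μ0, σ²) + φ·N(μ1, σ²) on ℝ and P' the mixture (1−φ)·N(μ0', σ'²) + φ·N(μ1', σ'²). Let g(x) = φ·f1(x)/(φ·f1(x) + (1−φ)·f0(x)) where f0, f1 are the densities of N(μ0, σ²), N(μ1, σ²), and define g' analogously from μ0', μ1', σ'. Then the pushforward of P under g equals the pushforward of P' under g': the two discriminant distributions are identical. -/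
/-!
Equal normalized separations mean that the affine map `T x = c x + b` with `c = σ'/σ` sending
`μ₀ ↦ μ₀'` also sends `μ₁ ↦ μ₁'`. Hence `T` pushes `N(μᵢ, σ²)` to `N(μᵢ', σ'²)`, so `T₊P = P'`,
and `fᵢ' ∘ T = c⁻¹ fᵢ` with the same Jacobian factor for both classes, which cancels in the
posterior: `g = g' ∘ T`. Therefore `g₊P = g'₊(T₊P) = g'₊P'`.
-/

open ProbabilityTheory MeasureTheory

lemma gaussianReal_map_affine {v v' : NNReal} (c b μ : ℝ) (hv : (v' : ℝ) = c ^ 2 * v) :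
    (gaussianReal μ v).map (fun x ↦ c * x + b) = gaussianReal (c * μ + b) v' := by
  obtain rfl : v' = .mk (c ^ 2) (sq_nonneg c) * v := NNReal.eq hv
  rw [show (fun x ↦ c * x + b) = (· + b) ∘ (c * ·) from rfl,
    ← Measure.map_map (measurable_add_const b) (measurable_const_mul c),
    gaussianReal_map_const_mul, gaussianReal_map_add_const]

lemma gaussianPDFReal_affine {v v' : NNReal} {c : ℝ} (hc : c ≠ 0) (b μ x : ℝ)
    (hv : (v' : ℝ) = c ^ 2 * v) :
    gaussianPDFReal (c * μ + b) v' (c * x + b) = |c|⁻¹ * gaussianPDFReal μ v x := by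
  obtain rfl : v' = .mk (c ^ 2) (sq_nonneg c) * v := NNReal.eq hv
  rw [gaussianPDFReal_add, add_sub_cancel_right, ← inv_mul_cancel_left₀ hc x,
    gaussianPDFReal_inv_mul hc, inv_mul_cancel_left₀ hc, inv_mul_cancel_left₀ (abs_ne_zero.2 hc)]

lemma mul_div_mul_add_mul_of_common_factor {K : Type*} [Field K] {k : K} (hk : k ≠ 0)
    (φ ψ a b : K) :
    φ * (k * a) / (φ * (k * a) + ψ * (k * b)) = φ * a / (φ * a + ψ * b) := by
  rw [mul_left_comm φ, mul_left_comm ψ, ← mul_add, mul_div_mul_left _ _ hk]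

lemma exists_affine_of_div_eq {σ σ' μ0 μ1 μ0' μ1' : ℝ} (hσ : σ ≠ 0) (hσ' : σ' ≠ 0)
    (hδ : (μ1 - μ0) / σ = (μ1' - μ0') / σ') :
    ∃ c b : ℝ, c ≠ 0 ∧ c * μ0 + b = μ0' ∧ c * μ1 + b = μ1' ∧ c * σ = σ' := by
  refine ⟨σ' / σ, μ0' - σ' / σ * μ0, div_ne_zero hσ' hσ, by ring, ?_, ?_⟩
  · rw [div_eq_div_iff hσ hσ'] at hδ
    field_simp
    linear_combination hδ
  · field_simp

theorem discriminant_two_parameter_general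
    (φ σ σ' μ0 μ1 μ0' μ1' : ℝ)
    (hσ : 0 < σ) (hσ' : 0 < σ')
    (hδ : (μ1 - μ0) / σ = (μ1' - μ0') / σ')
    (f0 f1 f0' f1' g g' : ℝ → ℝ)
    (hf0 : f0 = gaussianPDFReal μ0 ⟨σ ^ 2, sq_nonneg σ⟩)
    (hf1 : f1 = gaussianPDFReal μ1 ⟨σ ^ 2, sq_nonneg σ⟩)
    (hf0' : f0' = gaussianPDFReal μ0' ⟨σ' ^ 2, sq_nonneg σ'⟩)
    (hf1' : f1' = gaussianPDFReal μ1' ⟨σ' ^ 2, sq_nonneg σ'⟩)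
    (hg : ∀ x, g x = φ * f1 x / (φ * f1 x + (1 - φ) * f0 x))
    (hg' : ∀ x, g' x = φ * f1' x / (φ * f1' x + (1 - φ) * f0' x))
    (P P' : Measure ℝ)
    (hP : P = ENNReal.ofReal (1 - φ) • gaussianReal μ0 ⟨σ ^ 2, sq_nonneg σ⟩
            + ENNReal.ofReal φ • gaussianReal μ1 ⟨σ ^ 2, sq_nonneg σ⟩)
    (hP' : P' = ENNReal.ofReal (1 - φ) • gaussianReal μ0' ⟨σ' ^ 2, sq_nonneg σ'⟩
            + ENNReal.ofReal φ • gaussianReal μ1' ⟨σ' ^ 2, sq_nonneg σ'⟩) :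
    Measure.map g P = Measure.map g' P' := by
  obtain ⟨c, b, hc, rfl, rfl, rfl⟩ := exists_affine_of_div_eq hσ.ne' hσ'.ne' hδ
  have hvar : ((⟨(c * σ) ^ 2, sq_nonneg _⟩ : NNReal) : ℝ)
      = c ^ 2 * (⟨σ ^ 2, sq_nonneg σ⟩ : NNReal) := mul_pow c σ 2
  set T : ℝ → ℝ := fun x ↦ c * x + b
  have hT : Measurable T := (measurable_const_mul c).add_const b
  have hTP : P.map T = P' := by
    rw [hP, hP', Measure.map_add _ _ hT, Measure.map_smul, Measure.map_smul,
      gaussianReal_map_affine c b μ0 hvar, gaussianReal_map_affine c b μ1 hvar]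
  have hgT : g = g' ∘ T := funext fun x ↦ by
    rw [Function.comp_apply, show T x = c * x + b from rfl, hg, hg', hf0, hf1, hf0', hf1',
      gaussianPDFReal_affine hc b μ0 x hvar, gaussianPDFReal_affine hc b μ1 x hvar,
      mul_div_mul_add_mul_of_common_factor (by positivity)]
  have hg'_meas : Measurable g' := by
    rw [funext hg', hf0', hf1']
    fun_prop
  rw [hgT, ← Measure.map_map hg'_meas hT, hTP]

/-- Proposition 2 (2-parameter representation): two homoskedastic discriminant
distributions with the same class prior φ and the same normalized separation
δ = (μ1 − μ0)/σ are identical, i.e. the pushforwards of the two Gaussian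
mixtures under their respective discriminant transformations coincide. -/
theorem discriminant_two_parameter
    (φ σ σ' μ0 μ1 μ0' μ1' : ℝ)
    (hφ : φ ∈ Set.Ioo (0 : ℝ) 1)
    (hσ : 0 < σ) (hσ' : 0 < σ')
    (hμ : μ0 < μ1) (hμ' : μ0' < μ1')
    (hδ : (μ1 - μ0) / σ = (μ1' - μ0') / σ')
    (f0 f1 f0' f1' g g' : ℝ → ℝ)
    (hf0 : f0 = gaussianPDFReal μ0 ⟨σ ^ 2, sq_nonneg σ⟩)
    (hf1 : f1 = gaussianPDFReal μ1 ⟨σ ^ 2, sq_nonneg σ⟩)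
    (hf0' : f0' = gaussianPDFReal μ0' ⟨σ' ^ 2, sq_nonneg σ'⟩)
    (hf1' : f1' = gaussianPDFReal μ1' ⟨σ' ^ 2, sq_nonneg σ'⟩)
    (hg : ∀ x, g x = φ * f1 x / (φ * f1 x + (1 - φ) * f0 x))
    (hg' : ∀ x, g' x = φ * f1' x / (φ * f1' x + (1 - φ) * f0' x))
    (P P' : Measure ℝ)
    (hP : P = ENNReal.ofReal (1 - φ) • gaussianReal μ0 ⟨σ ^ 2, sq_nonneg σ⟩
            + ENNReal.ofReal φ • gaussianReal μ1 ⟨σ ^ 2, sq_nonneg σ⟩)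
    (hP' : P' = ENNReal.ofReal (1 - φ) • gaussianReal μ0' ⟨σ' ^ 2, sq_nonneg σ'⟩
            + ENNReal.ofReal φ • gaussianReal μ1' ⟨σ' ^ 2, sq_nonneg σ'⟩) :
    Measure.map g P = Measure.map g' P' :=
  discriminant_two_parameter_general φ σ σ' μ0 μ1 μ0' μ1' hσ hσ' hδ f0 f1 f0' f1' g g' hf0 hf1 hf0'
    hf1' hg hg' P P' hP hP'
end

section
/- Let φ ∈ (0,1), δ > 0, let g(x) = 1 / (1 + ((1−φ)/φ)·exp(−δx + δ²/2)), and let X be a random variable with the mixture law (1−φ)·N(0,1) + φ·N(δ,1). Then for every t ∈ (0,1), E[g(X) | g(X) > t] = φ·Φ̄(c − δ) / ((1−φ)·Φ̄(c) + φ·Φ̄(c − δ)), where c = g⁻¹(t) = (log(t/(1−t)) − log(φ/(1−φ)))/δ + δ/2 and Φ̄(z) = 1 − Φ(z) is the complementary CDF of the standard normal distribution. -/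
/-!
The map `g` is the posterior probability that `X` came from the `N(δ, 1)` component: since the
likelihood ratio of the two components is `p₀(x) / p_δ(x) = exp (-δ x + δ² / 2)`, one has
`g · ((1 - φ) p₀ + φ p_δ) = φ p_δ`, so `∫_{g > t} g dμ = φ · N(δ, 1)({g > t})`. As `g` is strictly
increasing with `g c = t`, the set `{g > t}` is `(c, ∞)`, whose masses under `N(δ, 1)` and `N(0, 1)`
are `Φ̄(c - δ)` and `Φ̄(c)`.
-/

open ProbabilityTheory Real MeasureTheory

lemma gaussianReal_Ioi (μ : ℝ) (v : NNReal) (c : ℝ) :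
    gaussianReal μ v (Set.Ioi c) = gaussianReal 0 v (Set.Ioi (c - μ)) := by
  rw [← zero_add μ, ← gaussianReal_map_add_const, Measure.map_apply (measurable_add_const μ)
    measurableSet_Ioi, Set.preimage_add_const_Ioi, zero_add]

noncomputable section

namespace Discriminant

def posterior (φ δ x : ℝ) : ℝ := 1 / (1 + (1 - φ) / φ * exp (-δ * x + δ ^ 2 / 2))

def mixturePDF (φ δ x : ℝ) : ℝ := (1 - φ) * gaussianPDFReal 0 1 x + φ * gaussianPDFReal δ 1 x

def mixture (φ δ : ℝ) : Measure ℝ :=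
  ENNReal.ofReal (1 - φ) • gaussianReal 0 1 + ENNReal.ofReal φ • gaussianReal δ 1

/-- The inverse of `posterior φ δ`, written `c = g⁻¹(t)` in the paper. -/
def threshold (φ δ t : ℝ) : ℝ := (log (t / (1 - t)) - log (φ / (1 - φ))) / δ + δ / 2

variable {φ δ : ℝ}

lemma gaussianPDFReal_zero_eq_mul_exp (δ x : ℝ) :
    gaussianPDFReal 0 1 x = gaussianPDFReal δ 1 x * exp (-δ * x + δ ^ 2 / 2) := by
  simp only [gaussianPDFReal, NNReal.coe_one, mul_one, mul_assoc, ← exp_add]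
  ring_nf

lemma one_add_mul_exp_pos (hφ₀ : 0 < φ) (hφ₁ : φ ≤ 1) (x : ℝ) :
    0 < 1 + (1 - φ) / φ * exp (-δ * x + δ ^ 2 / 2) := by
  have : 0 ≤ (1 - φ) / φ := div_nonneg (by linarith) hφ₀.le
  positivity

lemma posterior_nonneg (hφ₀ : 0 < φ) (hφ₁ : φ ≤ 1) (x : ℝ) : 0 ≤ posterior φ δ x :=
  one_div_nonneg.2 (one_add_mul_exp_pos hφ₀ hφ₁ x).le

lemma continuous_posterior (hφ₀ : 0 < φ) (hφ₁ : φ ≤ 1) : Continuous (posterior φ δ) :=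
  continuous_const.div (by fun_prop) fun x ↦ (one_add_mul_exp_pos hφ₀ hφ₁ x).ne'

lemma strictMono_posterior (hφ₀ : 0 < φ) (hφ₁ : φ < 1) (hδ : 0 < δ) :
    StrictMono (posterior φ δ) := by
  intro x y hxy
  have : 0 < (1 - φ) / φ := div_pos (by linarith) hφ₀
  have hexp : exp (-δ * y + δ ^ 2 / 2) < exp (-δ * x + δ ^ 2 / 2) :=
    exp_lt_exp.2 (by nlinarith)
  unfold posterior
  gcongr

lemma posterior_threshold (hφ₀ : 0 < φ) (hφ₁ : φ < 1) (hδ : δ ≠ 0) {t : ℝ} (ht₀ : 0 < t)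
    (ht₁ : t < 1) : posterior φ δ (threshold φ δ t) = t := by
  have hexp : exp (-δ * threshold φ δ t + δ ^ 2 / 2) = φ / (1 - φ) * ((1 - t) / t) := by
    rw [show -δ * threshold φ δ t + δ ^ 2 / 2 = log (φ / (1 - φ)) - log (t / (1 - t)) by
        unfold threshold; field_simp; ring,
      exp_sub, exp_log (by bound), exp_log (by bound), div_div_eq_mul_div, div_eq_mul_inv]
    field_simp
  have : 1 - φ ≠ 0 := by linarith
  have : 1 - t ≠ 0 := by linarith
  rw [posterior, hexp]
  field_simp
  ring

lemma setOf_lt_posterior (hφ₀ : 0 < φ) (hφ₁ : φ < 1) (hδ : 0 < δ) {t : ℝ} (ht₀ : 0 < t)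
    (ht₁ : t < 1) : {x | t < posterior φ δ x} = Set.Ioi (threshold φ δ t) := by
  ext x
  rw [Set.mem_Ioi, ← (strictMono_posterior hφ₀ hφ₁ hδ).lt_iff_lt,
    posterior_threshold hφ₀ hφ₁ hδ.ne' ht₀ ht₁]
  exact Iff.rfl

lemma posterior_mul_mixturePDF (hφ₀ : 0 < φ) (hφ₁ : φ ≤ 1) (x : ℝ) :
    posterior φ δ x * mixturePDF φ δ x = φ * gaussianPDFReal δ 1 x := by
  rw [posterior, mixturePDF, gaussianPDFReal_zero_eq_mul_exp δ, div_mul_eq_mul_div,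
    div_eq_iff (one_add_mul_exp_pos hφ₀ hφ₁ x).ne']
  field_simp
  ring

lemma mixture_eq_withDensity (hφ₀ : 0 ≤ φ) (hφ₁ : φ ≤ 1) :
    mixture φ δ = volume.withDensity fun x ↦ ENNReal.ofReal (mixturePDF φ δ x) := by
  have hpdf (μ : ℝ) : gaussianPDF μ 1 = fun x ↦ ENNReal.ofReal (gaussianPDFReal μ 1 x) := rfl
  rw [mixture, gaussianReal_of_var_ne_zero 0 one_ne_zero,
    gaussianReal_of_var_ne_zero δ one_ne_zero, ← withDensity_smul _ (measurable_gaussianPDF _ _),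
    ← withDensity_smul _ (measurable_gaussianPDF _ _),
    ← withDensity_add_left ((measurable_gaussianPDF _ _).const_smul _), hpdf, hpdf]
  congr 1 with x
  simp only [Pi.add_apply, Pi.smul_apply, smul_eq_mul]
  rw [mixturePDF, ← ENNReal.ofReal_mul (by linarith), ← ENNReal.ofReal_mul hφ₀,
    ← ENNReal.ofReal_add (mul_nonneg (by linarith) (gaussianPDFReal_nonneg _ _ _))
      (mul_nonneg hφ₀ (gaussianPDFReal_nonneg _ _ _))]

lemma setLIntegral_posterior_mixture (hφ₀ : 0 < φ) (hφ₁ : φ ≤ 1) {s : Set ℝ}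
    (hs : MeasurableSet s) :
    ∫⁻ x in s, ENNReal.ofReal (posterior φ δ x) ∂mixture φ δ
      = ENNReal.ofReal φ * gaussianReal δ 1 s := by
  have hmeas : Measurable fun x ↦ ENNReal.ofReal (mixturePDF φ δ x) := by
    unfold mixturePDF
    fun_prop
  rw [mixture_eq_withDensity hφ₀.le hφ₁, restrict_withDensity hs,
    lintegral_withDensity_eq_lintegral_mul _ hmeas
      (continuous_posterior hφ₀ hφ₁).measurable.ennreal_ofReal,
    gaussianReal_apply δ one_ne_zero, ← lintegral_const_mul' _ _ ENNReal.ofReal_ne_top]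
  congr 1 with x
  rw [Pi.mul_apply, mul_comm, ← ENNReal.ofReal_mul (posterior_nonneg hφ₀ hφ₁ x),
    posterior_mul_mixturePDF hφ₀ hφ₁, ENNReal.ofReal_mul hφ₀.le]
  rfl

lemma setIntegral_posterior_mixture (hφ₀ : 0 < φ) (hφ₁ : φ ≤ 1) {s : Set ℝ}
    (hs : MeasurableSet s) :
    ∫ x in s, posterior φ δ x ∂mixture φ δ = φ * (gaussianReal δ 1).real s := by
  rw [integral_eq_lintegral_of_nonneg_ae (ae_of_all _ (posterior_nonneg hφ₀ hφ₁))
      (continuous_posterior hφ₀ hφ₁).aestronglyMeasurable,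
    setLIntegral_posterior_mixture hφ₀ hφ₁ hs, ENNReal.toReal_mul, ENNReal.toReal_ofReal hφ₀.le]
  rfl

lemma mixture_real_apply (hφ₀ : 0 ≤ φ) (hφ₁ : φ ≤ 1) (s : Set ℝ) :
    (mixture φ δ).real s
      = (1 - φ) * (gaussianReal 0 1).real s + φ * (gaussianReal δ 1).real s := by
  rw [mixture, measureReal_add_apply (by simp [ENNReal.mul_eq_top]) (by simp [ENNReal.mul_eq_top]),
    measureReal_ennreal_smul_apply, measureReal_ennreal_smul_apply,
    ENNReal.toReal_ofReal (by linarith), ENNReal.toReal_ofReal hφ₀]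

end Discriminant

end

open Discriminant in
/-- Conditional mean (hit rate) of the discriminant distribution disc(φ,δ):
for X with the mixture law (1−φ)·N(0,1) + φ·N(δ,1) and every t ∈ (0,1),
E[g(X) | g(X) > t] = φ·Φ̄(c − δ) / ((1−φ)·Φ̄(c) + φ·Φ̄(c − δ)), where
c = g⁻¹(t) = (logit(t) − logit(φ))/δ + δ/2 and Φ̄ is the standard normal
complementary CDF. -/
theorem discriminant_conditional_mean
    (φ δ : ℝ) (hφ : φ ∈ Set.Ioo (0 : ℝ) 1) (hδ : 0 < δ)
    (g : ℝ → ℝ)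
    (hg : ∀ x, g x = 1 / (1 + ((1 - φ) / φ) * Real.exp (-δ * x + δ ^ 2 / 2)))
    (μ : Measure ℝ)
    (hμ : μ = ENNReal.ofReal (1 - φ) • gaussianReal 0 1
            + ENNReal.ofReal φ • gaussianReal δ 1)
    (Φc : ℝ → ℝ)
    (hΦc : ∀ z, Φc z = 1 - ((gaussianReal 0 1) (Set.Iic z)).toReal) :
    ∀ t ∈ Set.Ioo (0 : ℝ) 1,
      (∫ x in {x : ℝ | g x > t}, g x ∂μ) / (μ {x : ℝ | g x > t}).toReal =
        φ * Φc ((Real.log (t / (1 - t)) - Real.log (φ / (1 - φ))) / δ + δ / 2 - δ) /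
          ((1 - φ) * Φc ((Real.log (t / (1 - t)) - Real.log (φ / (1 - φ))) / δ + δ / 2)
            + φ * Φc ((Real.log (t / (1 - t)) - Real.log (φ / (1 - φ))) / δ + δ / 2 - δ)) := by
  rintro t ⟨ht₀, ht₁⟩
  obtain ⟨hφ₀, hφ₁⟩ := hφ
  obtain rfl : g = posterior φ δ := funext hg
  obtain rfl : μ = mixture φ δ := hμ
  simp only [gt_iff_lt, hΦc, ← measureReal_def, ← probReal_compl_eq_one_sub measurableSet_Iic,
    Set.compl_Iic]
  rw [setOf_lt_posterior hφ₀ hφ₁ hδ ht₀ ht₁,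
    setIntegral_posterior_mixture hφ₀ hφ₁.le measurableSet_Ioi,
    mixture_real_apply hφ₀.le hφ₁.le, measureReal_def, gaussianReal_Ioi δ]
  rfl
end
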